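/- arXiv:2004.07475 — 2 statements merged into one kernel-verified Lean document; each statement's English description precedes it below -/
import Mathlib

section
/- Equality holds in the discrete Wirtinger inequality (∑_{k=0}^{n-1}(ψ_{k+1}−ψ_k)² = 4 sin²(π/n) ∑_{k=0}^{n-1} ψ_k², with ψ₀=ψₙ, ∑ψ_k=0) if and only if there exist A, B ∈ ℝ such that ψ_k = A cos(2πk/n) + B sin(2πk/n) for all k. -/
open Real Finset
open scoped RealInnerProductSpace

abbrev E2 := EuclideanSpace ℝ (Fin 2)

/-- Rotation by π/2 in the plane. -/
noncomputable def Rot (v : E2) : E2 :=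
  (WithLp.equiv 2 (Fin 2 → ℝ)).symm ![-v 1, v 0]

/-- Rotation by angle θ in the plane. -/
noncomputable def RotBy (θ : ℝ) (v : E2) : E2 :=
  (WithLp.equiv 2 (Fin 2 → ℝ)).symm
    ![Real.cos θ * v 0 - Real.sin θ * v 1, Real.sin θ * v 0 + Real.cos θ * v 1]

/-! Read ψ as a function Φ on `ZMod n` (possible since `ψ 0 = ψ n`) and expand it in the
characters `e k = exp (2πik/n)`. Parseval turns `∑ (Φ (j+1) - Φ j)²` into
`n⁻¹ ∑ |e k - 1|² |Φ̂ k|²` and `∑ Φ j²` into `n⁻¹ ∑ |Φ̂ k|²`, where `|e k - 1|² = 4 sin²(πk/n)`.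
The mean condition kills `Φ̂ 0`, and for `k ≠ 0` the weight is at least `4 sin²(π/n)` with equality
exactly at `k = ±1`. So equality holds iff `Φ̂` is supported on `{1, -1}`, i.e. iff `Φ` lies in the
real span of `cos (2πj/n)` and `sin (2πj/n)`. -/

open ZMod AddChar ComplexConjugate

lemma Real.sin_le_sin_of_le_of_le_pi_sub {a x : ℝ} (ha : 0 ≤ a) (hax : a ≤ x) (hx : x ≤ π - a) :
    sin a ≤ sin x := by
  rw [← sub_nonneg, sin_sub_sin]
  refine mul_nonneg (mul_nonneg zero_le_two (sin_nonneg_of_nonneg_of_le_pi ?_ ?_))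
    (cos_nonneg_of_mem_Icc ⟨?_, ?_⟩) <;> linarith

lemma Real.sin_lt_sin_of_lt_of_lt_pi_sub {a x : ℝ} (ha : 0 ≤ a) (hax : a < x) (hx : x < π - a) :
    sin a < sin x := by
  rw [← sub_pos, sin_sub_sin]
  refine mul_pos (mul_pos zero_lt_two (sin_pos_of_pos_of_lt_pi ?_ ?_))
    (cos_pos_of_mem_Ioo ⟨?_, ?_⟩) <;> linarith

lemma Real.sin_pi_div_le_sin_pi_mul_div {N v : ℕ} (hv : 1 ≤ v) (hvN : v + 1 ≤ N) :
    sin (π / N) ≤ sin (π * v / N) := by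
  have hN : (0 : ℝ) < N := by exact_mod_cast (by omega : 0 < N)
  have ha : 0 < π / N := div_pos pi_pos hN
  have hx : π * v / N = π / N * v := by ring
  have hπ : π = π / N * N := (div_mul_cancel₀ π hN.ne').symm
  have hvR : (1 : ℝ) ≤ v := by exact_mod_cast hv
  have hvNR : (v : ℝ) + 1 ≤ N := by exact_mod_cast hvN
  rw [hx]
  exact sin_le_sin_of_le_of_le_pi_sub ha.le (le_mul_of_one_le_right ha.le hvR) (by nlinarith)

lemma Real.sin_pi_div_lt_sin_pi_mul_div {N v : ℕ} (hv : 2 ≤ v) (hvN : v + 2 ≤ N) :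
    sin (π / N) < sin (π * v / N) := by
  have hN : (0 : ℝ) < N := by exact_mod_cast (by omega : 0 < N)
  have ha : 0 < π / N := div_pos pi_pos hN
  have hx : π * v / N = π / N * v := by ring
  have hπ : π = π / N * N := (div_mul_cancel₀ π hN.ne').symm
  have hvR : (2 : ℝ) ≤ v := by exact_mod_cast hv
  have hvNR : (v : ℝ) + 2 ≤ N := by exact_mod_cast hvN
  rw [hx]
  exact sin_lt_sin_of_lt_of_lt_pi_sub ha.le (by nlinarith) (by nlinarith)

lemma Real.sin_pi_div_natCast_nonneg (N : ℕ) : 0 ≤ sin (π / N) := by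
  rcases N.eq_zero_or_pos with rfl | hN
  · simp
  · exact sin_nonneg_of_nonneg_of_le_pi (by positivity)
      (div_le_self pi_pos.le (by exact_mod_cast hN))

namespace ZMod

variable {N : ℕ} [NeZero N]

lemma sum_stdAddChar_mul (t : ZMod N) :
    ∑ j, stdAddChar (j * t) = if t = 0 then (N : ℂ) else 0 := by
  rw [sum_mulShift t (isPrimitive_stdAddChar N), ZMod.card, Nat.cast_ite, Nat.cast_zero]

lemma dft_stdAddChar_mul_of_ne {a k : ZMod N} (h : k ≠ a) :
    𝓕 (fun j ↦ stdAddChar (j * a)) k = 0 := by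
  have hexp (j : ZMod N) : -(j * k) + j * a = j * (a - k) := by ring
  simp_rw [dft_apply, smul_eq_mul, ← map_add_eq_mul, hexp, sum_stdAddChar_mul, sub_eq_zero,
    if_neg h.symm]

lemma dft_comp_add_one {E : Type*} [AddCommGroup E] [Module ℂ E] (Φ : ZMod N → E) (k : ZMod N) :
    𝓕 (fun j ↦ Φ (j + 1)) k = stdAddChar k • 𝓕 Φ k := by
  simp_rw [dft_apply, smul_sum, smul_smul, ← map_add_eq_mul]
  exact Fintype.sum_equiv (Equiv.addRight 1) _ _ fun j ↦ by
    simp only [Equiv.coe_addRight]; congr 2; ring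

lemma sum_norm_sq_dft (Φ : ZMod N → ℂ) : ∑ k, ‖𝓕 Φ k‖ ^ 2 = N * ∑ j, ‖Φ j‖ ^ 2 := by
  have hinv (j : ZMod N) : ∑ k, stdAddChar (k * j) * 𝓕 Φ k = N * Φ j := by
    have := invDFT_apply (𝓕 Φ) j
    simp only [LinearEquiv.symm_apply_apply, smul_eq_mul] at this
    rw [this, ← mul_assoc, mul_inv_cancel₀ (NeZero.ne _), one_mul]
  have hconj (k : ZMod N) : conj (𝓕 Φ k) = ∑ j, stdAddChar (j * k) * conj (Φ j) := by
    simp only [dft_apply, smul_eq_mul, map_sum, map_mul, ← map_neg_eq_conj, neg_neg]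
  apply Complex.ofReal_injective
  push_cast
  simp_rw [← Complex.mul_conj', hconj, mul_sum]
  rw [sum_comm]
  refine sum_congr rfl fun j _ ↦ ?_
  calc ∑ k, 𝓕 Φ k * (stdAddChar (j * k) * conj (Φ j))
      = conj (Φ j) * ∑ k, stdAddChar (k * j) * 𝓕 Φ k := by
        rw [mul_sum]; exact sum_congr rfl fun k _ ↦ by rw [mul_comm j k]; ring
    _ = N * (Φ j * conj (Φ j)) := by rw [hinv]; ring

lemma stdAddChar_natCast (m : ℕ) :
    stdAddChar (m : ZMod N) = Complex.exp (↑(2 * π * m / N) * Complex.I) := by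
  rw [stdAddChar_apply, toCircle_natCast]; push_cast; ring_nf

lemma stdAddChar_natCast_re (m : ℕ) : (stdAddChar (m : ZMod N)).re = cos (2 * π * m / N) := by
  rw [stdAddChar_natCast, Complex.exp_ofReal_mul_I_re]

lemma stdAddChar_natCast_im (m : ℕ) : (stdAddChar (m : ZMod N)).im = sin (2 * π * m / N) := by
  rw [stdAddChar_natCast, Complex.exp_ofReal_mul_I_im]

lemma norm_stdAddChar_natCast_sub_one_sq (m : ℕ) :
    ‖stdAddChar (m : ZMod N) - 1‖ ^ 2 = 4 * sin (π * m / N) ^ 2 := by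
  rw [stdAddChar_natCast, mul_comm, Complex.norm_exp_I_mul_ofReal_sub_one, Real.norm_eq_abs,
    sq_abs]
  ring_nf

lemma norm_stdAddChar_sub_one_sq (k : ZMod N) :
    ‖stdAddChar k - 1‖ ^ 2 = 4 * sin (π * k.val / N) ^ 2 := by
  rw [← norm_stdAddChar_natCast_sub_one_sq, natCast_zmod_val]

lemma norm_stdAddChar_neg_sub_one (k : ZMod N) :
    ‖stdAddChar (-k) - 1‖ = ‖stdAddChar k - 1‖ := by
  rw [map_neg_eq_conj, ← Complex.norm_conj, map_sub, map_one, Complex.conj_conj]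

lemma norm_stdAddChar_one_sub_one_sq :
    ‖stdAddChar (1 : ZMod N) - 1‖ ^ 2 = 4 * sin (π / N) ^ 2 := by
  rw [← Nat.cast_one, norm_stdAddChar_natCast_sub_one_sq, Nat.cast_one, mul_one]

lemma four_sin_sq_pi_div_le_norm_stdAddChar_sub_one_sq {k : ZMod N} (hk : k ≠ 0) :
    4 * sin (π / N) ^ 2 ≤ ‖stdAddChar k - 1‖ ^ 2 := by
  have hv : 1 ≤ k.val := Nat.one_le_iff_ne_zero.mpr ((val_ne_zero k).mpr hk)
  have hsin := Real.sin_pi_div_le_sin_pi_mul_div hv k.val_lt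
  rw [norm_stdAddChar_sub_one_sq]
  have := pow_le_pow_left₀ (Real.sin_pi_div_natCast_nonneg N) hsin 2
  linarith

lemma four_sin_sq_pi_div_lt_norm_stdAddChar_sub_one_sq {k : ZMod N} (h0 : k ≠ 0) (h1 : k ≠ 1)
    (h2 : k ≠ -1) : 4 * sin (π / N) ^ 2 < ‖stdAddChar k - 1‖ ^ 2 := by
  have hv0 : k.val ≠ 0 := (val_ne_zero k).mpr h0
  have hv1 : k.val ≠ 1 := fun h ↦ h1 (by rw [← natCast_zmod_val k, h, Nat.cast_one])
  have hv2 : k.val + 1 ≠ N := fun h ↦ h2 (by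
    rw [← natCast_zmod_val k, eq_neg_iff_add_eq_zero, ← Nat.cast_add_one, h, natCast_self])
  have hsin := Real.sin_pi_div_lt_sin_pi_mul_div (N := N) (v := k.val) (by omega)
    (by have := k.val_lt; omega)
  rw [norm_stdAddChar_sub_one_sq]
  have := pow_lt_pow_left₀ hsin (Real.sin_pi_div_natCast_nonneg N) two_ne_zero
  linarith

lemma mul_sum_norm_sub_sq (Φ : ZMod N → ℂ) :
    N * ∑ j, ‖Φ (j + 1) - Φ j‖ ^ 2 = ∑ k, ‖stdAddChar k - 1‖ ^ 2 * ‖𝓕 Φ k‖ ^ 2 := by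
  have hdiff (k : ZMod N) : 𝓕 (fun j ↦ Φ (j + 1) - Φ j) k = (stdAddChar k - 1) * 𝓕 Φ k := by
    rw [show (fun j ↦ Φ (j + 1) - Φ j) = (fun j ↦ Φ (j + 1)) - Φ from rfl, map_sub,
      Pi.sub_apply, dft_comp_add_one, smul_eq_mul, sub_one_mul]
  rw [← sum_norm_sq_dft (fun j ↦ Φ (j + 1) - Φ j)]
  simp_rw [hdiff, norm_mul, mul_pow]

theorem sum_norm_sub_sq_eq_iff (Φ : ZMod N → ℂ) (hmean : ∑ j, Φ j = 0) :
    ∑ j, ‖Φ (j + 1) - Φ j‖ ^ 2 = 4 * sin (π / N) ^ 2 * ∑ j, ‖Φ j‖ ^ 2 ↔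
      ∀ k, k ≠ 1 → k ≠ -1 → 𝓕 Φ k = 0 := by
  set c := 4 * sin (π / N) ^ 2
  have hF0 : 𝓕 Φ 0 = 0 := by rw [dft_apply_zero, hmean]
  have hspec : N * (∑ j, ‖Φ (j + 1) - Φ j‖ ^ 2 - c * ∑ j, ‖Φ j‖ ^ 2) =
      ∑ k, (‖stdAddChar k - 1‖ ^ 2 - c) * ‖𝓕 Φ k‖ ^ 2 := by
    simp_rw [mul_sub, mul_sum_norm_sub_sq, mul_left_comm _ c, ← sum_norm_sq_dft, mul_sum,
      ← sum_sub_distrib, sub_mul]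
  have hnonneg (k : ZMod N) : 0 ≤ (‖stdAddChar k - 1‖ ^ 2 - c) * ‖𝓕 Φ k‖ ^ 2 := by
    rcases eq_or_ne k 0 with rfl | hk
    · simp [hF0]
    · exact mul_nonneg (sub_nonneg.mpr (four_sin_sq_pi_div_le_norm_stdAddChar_sub_one_sq hk))
        (sq_nonneg _)
  have hzero (k : ZMod N) : (‖stdAddChar k - 1‖ ^ 2 - c) * ‖𝓕 Φ k‖ ^ 2 = 0 ↔
      (k ≠ 1 → k ≠ -1 → 𝓕 Φ k = 0) := by
    constructor
    · intro h h1 h2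
      rcases eq_or_ne k 0 with rfl | h0
      · exact hF0
      have hc := four_sin_sq_pi_div_lt_norm_stdAddChar_sub_one_sq h0 h1 h2
      simpa using (mul_eq_zero.mp h).resolve_left (sub_pos.mpr hc).ne'
    · intro h
      by_cases h1 : k = 1
      · simp [h1, c, norm_stdAddChar_one_sub_one_sq]
      by_cases h2 : k = -1
      · simp [h2, c, norm_stdAddChar_neg_sub_one, norm_stdAddChar_one_sub_one_sq]
      simp [h h1 h2]
  rw [← sub_eq_zero, ← mul_eq_zero_iff_right (Nat.cast_ne_zero.mpr (NeZero.ne N)), mul_comm,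
    hspec, sum_eq_zero_iff_of_nonneg fun k _ ↦ hnonneg k]
  simp only [mem_univ, true_implies, hzero]

variable (N) in
noncomputable def firstHarmonics : Submodule ℝ (ZMod N → ℝ) :=
  Submodule.span ℝ {fun j ↦ (stdAddChar j).re, fun j ↦ (stdAddChar j).im}

lemma mem_firstHarmonics_iff {Φ : ZMod N → ℝ} :
    Φ ∈ firstHarmonics N ↔
      ∃ A B : ℝ, ∀ j, Φ j = A * (stdAddChar j).re + B * (stdAddChar j).im := by
  simp only [firstHarmonics, Submodule.mem_span_pair, funext_iff, Pi.add_apply, Pi.smul_apply,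
    smul_eq_mul, eq_comm]

lemma re_mul_stdAddChar_mem_firstHarmonics (z : ℂ) {k : ZMod N} (hk : k = 1 ∨ k = -1) :
    (fun j ↦ (z * stdAddChar (j * k)).re) ∈ firstHarmonics N := by
  rw [mem_firstHarmonics_iff]
  rcases hk with rfl | rfl
  · exact ⟨z.re, -z.im, fun j ↦ by simp only [mul_one, Complex.mul_re]; ring⟩
  · exact ⟨z.re, z.im, fun j ↦ by
      simp only [mul_neg_one, map_neg_eq_conj, Complex.mul_re, Complex.conj_re, Complex.conj_im]
      ring⟩

-- Written with `j * 1` and `j * -1` so that `dft_stdAddChar_mul_of_ne` applies to both terms.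
lemma ofReal_comp_eq_smul_stdAddChar_add_smul_stdAddChar_neg (A B : ℝ) :
    (fun j : ZMod N ↦ ((A * (stdAddChar j).re + B * (stdAddChar j).im : ℝ) : ℂ)) =
      ((A - B * Complex.I) / 2) • (fun j ↦ stdAddChar (j * 1)) +
        ((A + B * Complex.I) / 2) • (fun j ↦ stdAddChar (j * -1)) := by
  funext j
  rw [Pi.add_apply, Pi.smul_apply, Pi.smul_apply, smul_eq_mul, smul_eq_mul, mul_one, mul_neg_one,
    map_neg_eq_conj]
  apply Complex.ext <;> simp <;> ring

lemma dft_eq_zero_iff_mem_firstHarmonics (Φ : ZMod N → ℝ) :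
    (∀ k, k ≠ 1 → k ≠ -1 → 𝓕 (fun j ↦ (Φ j : ℂ)) k = 0) ↔ Φ ∈ firstHarmonics N := by
  constructor
  · intro h
    have hΦ : Φ = ∑ k ∈ {1, -1}, fun j ↦
        ((N : ℂ)⁻¹ * 𝓕 (fun j ↦ (Φ j : ℂ)) k * stdAddChar (j * k)).re := by
      funext j
      have hinv := invDFT_apply (𝓕 (fun j ↦ (Φ j : ℂ))) j
      rw [LinearEquiv.symm_apply_apply, ← sum_subset (subset_univ {1, -1})
        fun k _ hk ↦ by simp_all] at hinv
      rw [Finset.sum_apply, ← Complex.ofReal_re (Φ j), hinv, smul_eq_mul, mul_sum, Complex.re_sum]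
      exact sum_congr rfl fun k _ ↦ by rw [smul_eq_mul, mul_comm k j]; ring_nf
    rw [hΦ]
    exact Submodule.sum_mem _ fun k hk ↦
      re_mul_stdAddChar_mem_firstHarmonics _ (by simpa using hk)
  · intro hΦ k h1 h2
    obtain ⟨A, B, hAB⟩ := mem_firstHarmonics_iff.mp hΦ
    simp_rw [hAB, ofReal_comp_eq_smul_stdAddChar_add_smul_stdAddChar_neg, map_add, dft_const_smul,
      Pi.add_apply, Pi.smul_apply, dft_stdAddChar_mul_of_ne h1, dft_stdAddChar_mul_of_ne h2,
      smul_zero, add_zero]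

theorem sum_sub_sq_eq_iff_mem_firstHarmonics (Φ : ZMod N → ℝ) (hmean : ∑ j, Φ j = 0) :
    ∑ j, (Φ (j + 1) - Φ j) ^ 2 = 4 * sin (π / N) ^ 2 * ∑ j, Φ j ^ 2 ↔ Φ ∈ firstHarmonics N := by
  rw [← dft_eq_zero_iff_mem_firstHarmonics, ← sum_norm_sub_sq_eq_iff _ (by exact_mod_cast hmean)]
  simp only [← Complex.ofReal_sub, Complex.norm_real, Real.norm_eq_abs, sq_abs]

lemma sum_range_natCast {M : Type*} [AddCommMonoid M] (f : ZMod N → M) :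
    ∑ k ∈ range N, f k = ∑ j, f j :=
  sum_nbij' (fun k ↦ (k : ZMod N)) val (fun _ _ ↦ mem_univ _) (fun j _ ↦ mem_range.mpr j.val_lt)
    (fun _ hk ↦ val_cast_of_lt (mem_range.mp hk)) (fun j _ ↦ natCast_zmod_val j) fun _ _ ↦ rfl

lemma forall_le_iff_forall_val {α : Type*} {ψ : ℕ → α} (hper : ψ 0 = ψ N) (G : ZMod N → α) :
    (∀ k ≤ N, ψ k = G k) ↔ ∀ j : ZMod N, ψ j.val = G j := by
  refine ⟨fun h j ↦ by rw [h j.val j.val_lt.le, natCast_zmod_val], fun h k hk ↦ ?_⟩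
  rcases hk.lt_or_eq with hk | rfl
  · rw [← h, val_cast_of_lt hk]
  · rw [← hper, natCast_self, ← h, val_zero]

end ZMod

theorem discrete_wirtinger_equality (n : ℕ) (hn : 1 ≤ n) (ψ : ℕ → ℝ)
    (hper : ψ 0 = ψ n) (hmean : ∑ k ∈ Finset.range n, ψ k = 0) :
    (∑ k ∈ Finset.range n, (ψ (k + 1) - ψ k) ^ 2 =
      4 * Real.sin (π / n) ^ 2 * ∑ k ∈ Finset.range n, (ψ k) ^ 2) ↔
    ∃ A B : ℝ, ∀ k ≤ n,
      ψ k = A * Real.cos (2 * π * k / n) + B * Real.sin (2 * π * k / n) := by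
  have : NeZero n := ⟨by omega⟩
  set Φ : ZMod n → ℝ := fun j ↦ ψ j.val
  have hψΦ : ∀ k ≤ n, ψ k = Φ k := (forall_le_iff_forall_val hper Φ).mpr fun _ ↦ rfl
  have hsum (f : ℝ → ℝ → ℝ) :
      ∑ k ∈ range n, f (ψ (k + 1)) (ψ k) = ∑ j, f (Φ (j + 1)) (Φ j) := by
    rw [← sum_range_natCast]
    refine sum_congr rfl fun k hk ↦ ?_
    have hk := mem_range.mp hk
    rw [hψΦ k hk.le, hψΦ (k + 1) hk, Nat.cast_add_one]
  rw [hsum fun x y ↦ (x - y) ^ 2, hsum fun _ y ↦ y ^ 2,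
    sum_sub_sq_eq_iff_mem_firstHarmonics Φ (by rw [← hmean, hsum fun _ y ↦ y]),
    mem_firstHarmonics_iff]
  simp_rw [← stdAddChar_natCast_re, ← stdAddChar_natCast_im]
  exact exists₂_congr fun A B ↦ (forall_le_iff_forall_val hper _).symm
end

section
/- With the vertex normals N_k = (ν_k + ν_{k-1})/(1 + cos θ_k) and parallel curve p_k(t) = p_k + t N_k, the edge lengths satisfy the discrete Steiner formula |p_{k+1}(t) − p_k(t)| = |p_{k+1} − p_k| · |1 − t κ(e_k)|, where κ(e_k) = (tan(θ_k/2) + tan(θ_{k+1}/2))/|p_{k+1} − p_k|. -/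
open Real Finset
open scoped RealInnerProductSpace

lemma Rot_apply0 (v : E2) : Rot v 0 = -v 1 := rfl
lemma Rot_apply1 (v : E2) : Rot v 1 = v 0 := rfl
lemma RotBy_apply0 (θ : ℝ) (v : E2) :
    RotBy θ v 0 = Real.cos θ * v 0 - Real.sin θ * v 1 := rfl
lemma RotBy_apply1 (θ : ℝ) (v : E2) :
    RotBy θ v 1 = Real.sin θ * v 0 + Real.cos θ * v 1 := rfl

lemma rotBy_eq (θ : ℝ) (v : E2) :
    RotBy θ v = Real.cos θ • v + Real.sin θ • Rot v := by
  ext i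
  fin_cases i <;>
    simp [RotBy_apply0, RotBy_apply1, Rot_apply0, Rot_apply1] <;> ring

lemma rotBy_neg_rotBy (θ : ℝ) (v : E2) : RotBy (-θ) (RotBy θ v) = v := by
  have h := Real.sin_sq_add_cos_sq θ
  ext i
  fin_cases i
  · show RotBy (-θ) (RotBy θ v) 0 = v 0
    rw [RotBy_apply0, RotBy_apply0, RotBy_apply1, Real.cos_neg, Real.sin_neg]
    linear_combination v 0 * h
  · show RotBy (-θ) (RotBy θ v) 1 = v 1
    rw [RotBy_apply1, RotBy_apply0, RotBy_apply1, Real.cos_neg, Real.sin_neg]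
    linear_combination v 1 * h

lemma rot_rot (v : E2) : Rot (Rot v) = -v := by
  ext i
  fin_cases i <;> simp [Rot_apply0, Rot_apply1]

lemma one_add_cos_pos {x : ℝ} (hx : x ∈ Set.Ioo (-π) π) : 0 < 1 + Real.cos x := by
  have h2 : Real.cos (x / 2) > 0 := by
    apply Real.cos_pos_of_mem_Ioo
    constructor <;> [linarith [hx.1]; linarith [hx.2]]
  have : Real.cos x = 2 * Real.cos (x / 2) ^ 2 - 1 := by
    have := Real.cos_sq (x / 2)
    have hxx : 2 * (x / 2) = x := by ring
    rw [hxx] at this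
    linarith
  nlinarith

lemma tan_half_id {x : ℝ} (hx : x ∈ Set.Ioo (-π) π) :
    Real.sin x / (1 + Real.cos x) = Real.tan (x / 2) := by
  have h2 : Real.cos (x / 2) > 0 := by
    apply Real.cos_pos_of_mem_Ioo
    constructor <;> [linarith [hx.1]; linarith [hx.2]]
  have hc : Real.cos x = 2 * Real.cos (x / 2) ^ 2 - 1 := by
    have := Real.cos_sq (x / 2)
    have hxx : 2 * (x / 2) = x := by ring
    rw [hxx] at this
    linarith
  have hs : Real.sin x = 2 * Real.sin (x / 2) * Real.cos (x / 2) := by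
    have := Real.sin_two_mul (x / 2)
    have hxx : 2 * (x / 2) = x := by ring
    rw [hxx] at this
    linarith
  rw [Real.tan_eq_sin_div_cos, hc, hs]
  field_simp
  ring

theorem discrete_steiner_formula (n : ℕ) [NeZero n]
    (p : ZMod n → E2) (hreg : ∀ k, p (k + 1) ≠ p k)
    (ν : ZMod n → E2)
    (hν : ∀ k, ν k = Rot (‖p (k + 1) - p k‖⁻¹ • (p (k + 1) - p k)))
    (θ : ZMod n → ℝ) (hθrange : ∀ k, θ k ∈ Set.Ioo (-π) π)
    (hθ : ∀ k, RotBy (θ k) (ν (k - 1)) = ν k)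
    (N : ZMod n → E2)
    (hN : ∀ k, N k = (1 + Real.cos (θ k))⁻¹ • (ν k + ν (k - 1))) :
    ∀ (t : ℝ) (k : ZMod n),
      ‖(p (k + 1) + t • N (k + 1)) - (p k + t • N k)‖ =
        ‖p (k + 1) - p k‖ *
          |1 - t * ((Real.tan (θ k / 2) + Real.tan (θ (k + 1) / 2)) / ‖p (k + 1) - p k‖)| := by
  intro t k
  set u : E2 := p (k + 1) - p k with hu
  have hune : u ≠ 0 := sub_ne_zero.mpr (hreg k)
  have hL : (0 : ℝ) < ‖u‖ := norm_pos_iff.mpr hune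
  set T : E2 := ‖u‖⁻¹ • u with hT
  have hνk : ν k = Rot T := hν k
  -- ν (k-1) = RotBy (-θ k) (ν k)
  have hνkm : ν (k - 1) = RotBy (-(θ k)) (ν k) := by
    rw [← hθ k, rotBy_neg_rotBy]
  have hk1 : (k + 1 : ZMod n) - 1 = k := by ring
  have hνkp : ν (k + 1) = RotBy (θ (k + 1)) (ν k) := by
    rw [← hθ (k + 1), hk1]
  have hc1 : (0 : ℝ) < 1 + Real.cos (θ k) := one_add_cos_pos (hθrange k)
  have hc2 : (0 : ℝ) < 1 + Real.cos (θ (k + 1)) := one_add_cos_pos (hθrange (k + 1))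
  have hrr : Rot (ν k) = -T := by rw [hνk, rot_rot]
  -- N k = ν k + tan (θ k / 2) • T
  have hNk : N k = ν k + Real.tan (θ k / 2) • T := by
    rw [hN k, hνkm, rotBy_eq, Real.cos_neg, Real.sin_neg, hrr,
      ← tan_half_id (hθrange k)]
    rw [smul_neg, neg_smul, smul_smul]
    have : (1 + Real.cos (θ k)) ≠ 0 := ne_of_gt hc1
    match_scalars <;> field_simp <;> ring
  have hNk1 : N (k + 1) = ν k - Real.tan (θ (k + 1) / 2) • T := by
    rw [hN (k + 1), hk1, hνkp, rotBy_eq, hrr, ← tan_half_id (hθrange (k + 1))]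
    rw [smul_neg, smul_smul]
    have : (1 + Real.cos (θ (k + 1))) ≠ 0 := ne_of_gt hc2
    match_scalars <;> field_simp <;> ring
  -- the difference vector
  set s : ℝ := Real.tan (θ k / 2) + Real.tan (θ (k + 1) / 2) with hs
  have hdiff : (p (k + 1) + t • N (k + 1)) - (p k + t • N k)
      = (1 - t * (s / ‖u‖)) • u := by
    rw [hNk, hNk1, hT]
    have hLne : ‖u‖ ≠ 0 := ne_of_gt hL
    match_scalars <;> field_simp <;> ring
  rw [hdiff, norm_smul, Real.norm_eq_abs, mul_comm]
end
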